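/- arXiv:1009.5341 — 4 statements merged into one kernel-verified Lean document; each statement's English description precedes it below -/
import Mathlib

section
/- For any finite directed acyclic graph G, the transitive reduction of G (the subgraph obtained by deleting all superfluous edges) has the same transitive closure as G. -/
/-!
Induct on the set of vertices strictly between the endpoints of an edge `u → v`. If the edge is
not superfluous it survives in the reduction. If it is, there is a path from `u` to `v` avoiding
it; every edge `x → y` of that path has its open interval `(x, y)` strictly inside `(u, v)`,
since acyclicity puts `x` or `y` in `(u, v) \ (x, y)`. By induction each such edge is a path in
the reduction, and so is the edge `u → v`.
-/

/-- An edge `(u,v)` of a DAG `E` is superfluous if it is an edge and deleting it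
leaves the transitive closure unchanged. -/
def Superfluous {V : Type*} (E : V → V → Prop) (u v : V) : Prop :=
  E u v ∧ ∀ a b, Relation.TransGen E a b ↔
    Relation.TransGen (fun a b => E a b ∧ ¬ (a = u ∧ b = v)) a b

open Relation

theorem Relation.TransGen.of_forall_on_path {α : Type*} {r s : α → α → Prop} {a b : α}
    (h : TransGen r a b)
    (hs : ∀ x y, ReflTransGen r a x → r x y → ReflTransGen r y b → TransGen s x y) :
    TransGen s a b := by
  suffices ∀ x, TransGen r x b → ReflTransGen r a x → TransGen s x b from this a h .refl
  intro x hx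
  induction hx using TransGen.head_induction_on with
  | single hxb => exact fun hax => hs _ _ hax hxb .refl
  | head hxc hcb ih =>
    exact fun hax => (hs _ _ hax hxc hcb.to_reflTransGen).trans (ih (hax.tail hxc))

section TransitiveReduction

variable {V : Type*} {E : V → V → Prop}

def strictInterval (E : V → V → Prop) (u v : V) : Set V :=
  {z | TransGen E u z ∧ TransGen E z v}

def transReduction (E : V → V → Prop) (a b : V) : Prop :=
  E a b ∧ ¬ Superfluous E a b

theorem strictInterval_ssubset (hacyc : ∀ v, ¬ TransGen E v v) {u v x y : V} (hxy : E x y)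
    (hux : ReflTransGen E u x) (hyv : ReflTransGen E y v) (hne : ¬ (x = u ∧ y = v)) :
    strictInterval E x y ⊂ strictInterval E u v := by
  have hsub : strictInterval E x y ⊆ strictInterval E u v :=
    fun z hz => ⟨TransGen.trans_right hux hz.1, hz.2.trans_left hyv⟩
  refine (Set.ssubset_iff_of_subset hsub).mpr ?_
  by_cases hxu : x = u
  · have hyv' : TransGen E y v :=
      (reflTransGen_iff_eq_or_transGen.mp hyv).resolve_left fun h => hne ⟨hxu, h.symm⟩
    exact ⟨y, ⟨TransGen.trans_right hux (.single hxy), hyv'⟩, fun h => hacyc y h.2⟩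
  · have hux' : TransGen E u x := (reflTransGen_iff_eq_or_transGen.mp hux).resolve_left hxu
    exact ⟨x, ⟨hux', (TransGen.single hxy).trans_left hyv⟩, fun h => hacyc x h.1⟩

theorem transGen_transReduction_of_edge [Finite V] (hacyc : ∀ v, ¬ TransGen E v v) {u v : V}
    (huv : E u v) : TransGen (transReduction E) u v := by
  induction hI : strictInterval E u v using WellFoundedLT.induction generalizing u v with
  | ind I ih =>
  by_cases hsup : Superfluous E u v
  · have hbypass := (hsup.2 u v).mp (.single huv)
    have hlift : ∀ {a b}, ReflTransGen (fun a b => E a b ∧ ¬ (a = u ∧ b = v)) a b →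
        ReflTransGen E a b := ReflTransGen.mono (fun _ _ h => h.1) _ _
    refine hbypass.of_forall_on_path fun x y hux hxy hyv => ?_
    exact ih _ (hI ▸ strictInterval_ssubset hacyc hxy.1 (hlift hux) (hlift hyv) hxy.2) hxy.1 rfl
  · exact .single ⟨huv, hsup⟩

end TransitiveReduction

/-- The transitive reduction of a finite simple DAG (deleting all superfluous edges)
has the same transitive closure as the DAG itself. -/
theorem stmt2 {V : Type*} [Fintype V] (E : V → V → Prop)
    (hacyc : ∀ v, ¬ Relation.TransGen E v v) :
    ∀ a b, Relation.TransGen (fun a b => E a b ∧ ¬ Superfluous E a b) a b ↔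
      Relation.TransGen E a b := fun a b =>
  ⟨TransGen.mono (fun _ _ h => h.1) a b,
    TransGen.closed (fun _ _ h => transGen_transReduction_of_edge hacyc h) a b⟩
end

section
/- Two finite directed acyclic graphs on the same vertex set have the same transitive closure if and only if they have the same transitive reduction. -/
/-- The covering relation of the transitive closure of a DAG: the edge relation of
its transitive reduction. -/
def covRel {V : Type*} (E : V → V → Prop) (u v : V) : Prop :=
  Relation.TransGen E u v ∧ ¬ ∃ w, Relation.TransGen E u w ∧ Relation.TransGen E w v

/-!
The covering relation is defined from the transitive closure alone, so equal closures give
equal reductions. Conversely, in a finite acyclic graph every path `a → b` that is not a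
covering pair passes through some `w`, and the open intervals `(a, w)` and `(w, b)` are
strictly smaller than `(a, b)`; by induction on the size of the interval, the closure is
generated by the covering pairs and hence is recovered from the reduction.
-/

open Relation

namespace covRel

variable {V : Type*} {E : V → V → Prop}

lemma congr_of_transGen_iff {E' : V → V → Prop}
    (h : ∀ a b, TransGen E a b ↔ TransGen E' a b) (a b : V) :
    covRel E a b ↔ covRel E' a b := by
  simp only [covRel, h]

def between (E : V → V → Prop) (a b : V) : Set V := {x | TransGen E a x ∧ TransGen E x b}

variable [Finite V]

lemma ncard_between_lt_left (hE : ∀ v, ¬ TransGen E v v) {a w b : V}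
    (haw : TransGen E a w) (hwb : TransGen E w b) :
    (between E a w).ncard < (between E a b).ncard :=
  Set.ncard_lt_ncard (ssubset_of_subset_not_superset (fun _ hx => ⟨hx.1, hx.2.trans hwb⟩)
    fun hsub => hE w (hsub ⟨haw, hwb⟩).2)

lemma ncard_between_lt_right (hE : ∀ v, ¬ TransGen E v v) {a w b : V}
    (haw : TransGen E a w) (hwb : TransGen E w b) :
    (between E w b).ncard < (between E a b).ncard :=
  Set.ncard_lt_ncard (ssubset_of_subset_not_superset (fun _ hx => ⟨haw.trans hx.1, hx.2⟩)
    fun hsub => hE w (hsub ⟨haw, hwb⟩).1)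

lemma transGen_of_transGen (hE : ∀ v, ¬ TransGen E v v) {a b : V} (hab : TransGen E a b) :
    TransGen (covRel E) a b := by
  induction h : (between E a b).ncard using Nat.strong_induction_on generalizing a b with
  | _ n ih =>
    by_cases hcov : ∃ w, TransGen E a w ∧ TransGen E w b
    · obtain ⟨w, haw, hwb⟩ := hcov
      exact (ih _ (h ▸ ncard_between_lt_left hE haw hwb) haw rfl).trans
        (ih _ (h ▸ ncard_between_lt_right hE haw hwb) hwb rfl)
    · exact .single ⟨hab, hcov⟩

lemma transGen_iff (hE : ∀ v, ¬ TransGen E v v) (a b : V) :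
    TransGen (covRel E) a b ↔ TransGen E a b :=
  ⟨TransGen.closed (fun _ _ h => h.1) a b, transGen_of_transGen hE⟩

end covRel

/-- Two finite DAGs on the same vertex set have the same transitive closure iff
they have the same transitive reduction. -/
theorem stmt4 {V : Type*} [Fintype V] (E₁ E₂ : V → V → Prop)
    (h₁ : ∀ v, ¬ Relation.TransGen E₁ v v) (h₂ : ∀ v, ¬ Relation.TransGen E₂ v v) :
    (∀ a b, Relation.TransGen E₁ a b ↔ Relation.TransGen E₂ a b) ↔
      (∀ a b, covRel E₁ a b ↔ covRel E₂ a b) := by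
  refine ⟨covRel.congr_of_transGen_iff, fun h a b => ?_⟩
  have hcov : covRel E₁ = covRel E₂ := funext₂ fun a b => propext (h a b)
  rw [← covRel.transGen_iff h₁, ← covRel.transGen_iff h₂, hcov]
end

section
/- Let Σ be a finite alphabet with an irreflexive symmetric independence relation I, and let α ∈ Σ*. Define the dependence DAG dep_I(α) on vertices {1,...,|α|} with an edge from i to j iff i < j and (α_i, α_j) ∉ I. If β is obtained from α by swapping two adjacent letters α_k, α_{k+1} with (α_k, α_{k+1}) ∈ I, then the transitive closures of dep_I(α) and dep_I(β) are isomorphic as labeled partial orders (via the transposition of positions k and k+1). -/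
/-- The dependence DAG of a word `α` (of length `n`, given as a function on positions)
with respect to an independence relation `I`: an edge from position `i` to position `j`
iff `i < j` and the letters are dependent. -/
def depF {A : Type*} (I : A → A → Prop) {n : ℕ} (α : Fin n → A) (i j : Fin n) : Prop :=
  i < j ∧ ¬ I (α i) (α j)

/-! The transposition of two adjacent positions is monotone on every pair of positions except the
swapped pair itself, and independence of the swapped letters means that pair carries no
dependence edge; so every edge, hence every path, of `dep_I(α)` is carried to one of `dep_I(β)`.
The converse is the same argument applied to `β`, whose swapped letters are independent by
symmetry of `I`, since the transposition is an involution. -/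

theorem CovBy.swap_lt_swap {ι : Type*} [LinearOrder ι] {k k' i j : ι} (hk : k ⋖ k')
    (hij : i < j) (hne : ¬ (i = k ∧ j = k')) : Equiv.swap k k' i < Equiv.swap k k' j := by
  by_cases hik : i = k
  · subst hik
    have hjk' : j ≠ k' := fun h ↦ hne ⟨rfl, h⟩
    rw [Equiv.swap_apply_left, Equiv.swap_apply_of_ne_of_ne hij.ne' hjk']
    exact (hk.ge_of_gt hij).lt_of_ne' hjk'
  by_cases hik' : i = k'
  · subst hik'
    rw [Equiv.swap_apply_right,
      Equiv.swap_apply_of_ne_of_ne (hk.lt.trans hij).ne' hij.ne']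
    exact hk.lt.trans hij
  rw [Equiv.swap_apply_of_ne_of_ne hik hik']
  by_cases hjk : j = k
  · subst hjk
    rw [Equiv.swap_apply_left]
    exact hij.trans hk.lt
  by_cases hjk' : j = k'
  · subst hjk'
    rw [Equiv.swap_apply_right]
    exact (hk.le_of_lt hij).lt_of_ne hik
  rwa [Equiv.swap_apply_of_ne_of_ne hjk hjk']

theorem depF_swap {A : Type*} {I : A → A → Prop} {n : ℕ} {α : Fin n → A} {k k' i j : Fin n}
    (hk : k ⋖ k') (hI : I (α k) (α k')) (h : depF I α i j) :
    depF I (α ∘ Equiv.swap k k') (Equiv.swap k k' i) (Equiv.swap k k' j) := by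
  obtain ⟨hij, hdep⟩ := h
  refine ⟨hk.swap_lt_swap hij ?_, by simpa using hdep⟩
  rintro ⟨rfl, rfl⟩
  exact hdep hI

theorem transGen_depF_swap {A : Type*} {I : A → A → Prop} {n : ℕ} {α : Fin n → A}
    {k k' i j : Fin n} (hk : k ⋖ k') (hI : I (α k) (α k'))
    (h : Relation.TransGen (depF I α) i j) :
    Relation.TransGen (depF I (α ∘ Equiv.swap k k')) (Equiv.swap k k' i) (Equiv.swap k k' j) :=
  Relation.TransGen.lift (Equiv.swap k k') (fun _ _ ↦ depF_swap hk hI) _ _ h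

theorem stmt13_general {A : Type*} (I : A → A → Prop)
    (hsymm : ∀ a b, I a b → I b a)
    {n : ℕ} (α : Fin n → A) (k k' : Fin n) (hk : (k' : ℕ) = (k : ℕ) + 1)
    (hI : I (α k) (α k')) :
    (∀ i, (α ∘ Equiv.swap k k') (Equiv.swap k k' i) = α i) ∧
    (∀ i j, Relation.TransGen (depF I α) i j ↔
      Relation.TransGen (depF I (α ∘ Equiv.swap k k'))
        (Equiv.swap k k' i) (Equiv.swap k k' j)) := by
  have hcov : k ⋖ k' := ⟨Fin.lt_def.2 (by omega), fun c h₁ h₂ ↦ by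
    rw [Fin.lt_def] at h₁ h₂; omega⟩
  have hswap : ∀ x, Equiv.swap k k' (Equiv.swap k k' x) = x := Equiv.swap_apply_self k k'
  refine ⟨fun i ↦ congrArg α (hswap i), fun i j ↦ ⟨transGen_depF_swap hcov hI, fun h ↦ ?_⟩⟩
  have hI' : I ((α ∘ Equiv.swap k k') k) ((α ∘ Equiv.swap k k') k') := by
    simpa using hsymm _ _ hI
  have hα : (α ∘ Equiv.swap k k') ∘ Equiv.swap k k' = α := funext fun x ↦ congrArg α (hswap x)
  simpa only [hα, hswap] using transGen_depF_swap hcov hI' h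

/-- Swapping two adjacent independent letters of a word yields a word whose induced
labeled partial order (transitive closure of the dependence DAG) is isomorphic to the
original one, via the transposition of the two positions: the transposition preserves
labels and is an order isomorphism. -/
theorem stmt13 {A : Type*} (I : A → A → Prop)
    (hsymm : ∀ a b, I a b → I b a) (hirr : ∀ a, ¬ I a a)
    {n : ℕ} (α : Fin n → A) (k k' : Fin n) (hk : (k' : ℕ) = (k : ℕ) + 1)
    (hI : I (α k) (α k')) :
    (∀ i, (α ∘ Equiv.swap k k') (Equiv.swap k k' i) = α i) ∧
    (∀ i j, Relation.TransGen (depF I α) i j ↔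
      Relation.TransGen (depF I (α ∘ Equiv.swap k k'))
        (Equiv.swap k k' i) (Equiv.swap k k' j)) :=
  stmt13_general I hsymm α k k' hk hI
end

section
/- Let Σ be a finite alphabet with an irreflexive symmetric independence relation I. For any string α ∈ Σ*, every linearization of the partial order po_I(α) belongs to the trace [α]_I. Consequently, two strings α, β induce the same labeled partial order po_I(α) ≅ po_I(β) if they are related by a sequence of swaps of adjacent independent letters. -/
/-- The dependence DAG of a word `α : List A` with respect to an independence relation
`I`: an edge from position `i` to position `j` iff `i < j` and the letters are
dependent. -/
def depL {A : Type*} (I : A → A → Prop) (α : List A) (i j : Fin α.length) : Prop :=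
  i < j ∧ ¬ I (α.get i) (α.get j)

/-- One step of Mazurkiewicz trace equivalence: swap two adjacent independent letters. -/
def SwapRel {A : Type*} (I : A → A → Prop) (α β : List A) : Prop :=
  ∃ u a b w, I a b ∧ α = u ++ a :: b :: w ∧ β = u ++ b :: a :: w

/-!
A reordering of a word is reachable by swaps as soon as every pair of positions it inverts
carries independent letters: move the first letter of the word rightwards to its place in the
target, past letters that all follow it in the word but precede it in the target, and recurse
on the rest. A linearization of `po_I(α)` inverts no dependent pair, since such a pair is an
edge of the dependence DAG. Conversely, a swap of adjacent independent letters `a b` is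
matched by the transposition of their two positions; it preserves labels and the order of
every dependent pair (the pair `b a` is independent by symmetry of `I`), so it is an
isomorphism of dependence DAGs, hence of their transitive closures.
-/

open Relation List

theorem Equiv.swap_add_one_lt_iff {k i j : ℕ} (h₁ : ¬(i = k ∧ j = k + 1))
    (h₂ : ¬(i = k + 1 ∧ j = k)) :
    Equiv.swap k (k + 1) i < Equiv.swap k (k + 1) j ↔ i < j := by
  simp only [Equiv.swap_apply_def]
  split_ifs <;> omega

theorem RelIso.transGen_apply_iff {α β : Type*} {r : α → α → Prop} {s : β → β → Prop}
    (e : r ≃r s) {a b : α} : TransGen s (e a) (e b) ↔ TransGen r a b :=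
  ⟨fun h => by simpa [Function.onFun] using h.lift e.symm fun _ _ => e.symm.map_rel_iff.2,
    fun h => h.lift e fun _ _ => e.map_rel_iff.2⟩

namespace SwapRel

variable {A : Type*} {I : A → A → Prop}

theorem cons {l l' : List A} (h : SwapRel I l l') (c : A) : SwapRel I (c :: l) (c :: l') := by
  obtain ⟨u, a, b, w, hab, rfl, rfl⟩ := h
  exact ⟨c :: u, a, b, w, hab, rfl, rfl⟩

theorem reflTransGen_cons {l l' : List A} (h : ReflTransGen (SwapRel I) l l') (c : A) :
    ReflTransGen (SwapRel I) (c :: l) (c :: l') :=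
  h.lift (c :: ·) fun _ _ h => h.cons c

theorem reflTransGen_cons_append {a : A} {v : List A} (hv : ∀ b ∈ v, I a b) (w : List A) :
    ReflTransGen (SwapRel I) (a :: (v ++ w)) (v ++ a :: w) := by
  induction v with
  | nil => rfl
  | cons b v ih =>
    refine .head ⟨[], a, b, v ++ w, hv b mem_cons_self, rfl, rfl⟩ ?_
    exact reflTransGen_cons (ih fun c hc => hv c (mem_cons_of_mem b hc)) b

theorem reflTransGen_map_of_perm {ι : Type*} (f : ι → A) {L M : List ι} (hLM : L ~ M)
    (hinv : ∀ x y, [x, y] <+ L → [y, x] <+ M → I (f x) (f y)) :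
    ReflTransGen (SwapRel I) (L.map f) (M.map f) := by
  induction L generalizing M with
  | nil => rw [hLM.nil_eq]
  | cons x L ih =>
    obtain ⟨M₁, M₂, rfl⟩ := mem_iff_append.1 (hLM.subset mem_cons_self)
    have hL : L ~ M₁ ++ M₂ := (hLM.trans perm_middle).cons_inv
    have hfront : ∀ b ∈ M₁.map f, I (f x) b := forall_mem_map.2 fun y hy =>
      hinv x y
        (cons_sublist_cons.2 (singleton_sublist.2 (hL.symm.subset (mem_append_left M₂ hy))))
        ((singleton_sublist.2 hy).append (singleton_sublist.2 mem_cons_self))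
    have hrest := ih hL fun y z hyz hzy =>
      hinv y z (hyz.cons x) (hzy.trans ((sublist_cons_self x M₂).append_left M₁))
    simpa using (reflTransGen_cons hrest (f x)).trans
      (by simpa using reflTransGen_cons_append hfront (M₂.map f))

theorem reflTransGen_ofFn_comp_perm {n : ℕ} (f : Fin n → A) (σ : Equiv.Perm (Fin n))
    (hinv : ∀ i j, i < j → σ.symm j < σ.symm i → I (f i) (f j)) :
    ReflTransGen (SwapRel I) (ofFn f) (ofFn (f ∘ σ)) := by
  have hσ : (finRange n |>.map σ).Pairwise fun a b => σ.symm a < σ.symm b :=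
    pairwise_map.2 (by simpa using pairwise_lt_finRange n)
  rw [ofFn_eq_map, ofFn_eq_map, ← List.map_map]
  exact reflTransGen_map_of_perm f σ.map_finRange_perm.symm fun i j hij hji =>
    hinv i j (pairwise_pair.1 ((pairwise_lt_finRange n).sublist hij))
      ((pairwise_pair (R := fun a b => σ.symm a < σ.symm b)).1 (hσ.sublist hji))

theorem exists_relIso_depL (hsymm : ∀ a b, I a b → I b a) {α β : List A}
    (h : SwapRel I α β) :
    ∃ e : depL I α ≃r depL I β, ∀ i, β.get (e i) = α.get i := by
  obtain ⟨u, a, b, w, hab, rfl, rfl⟩ := h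
  set k := u.length
  let s : Fin (u ++ a :: b :: w).length ≃ Fin (u ++ b :: a :: w).length :=
    (Equiv.swap ⟨k, by simp [k]⟩ ⟨k + 1, by simp [k]⟩).trans (finCongr (by simp))
  have hs : ∀ i, (s i : ℕ) = Equiv.swap k (k + 1) i := fun i => by
    simp only [s, Equiv.trans_apply, finCongr_apply, Fin.val_cast, Equiv.swap_apply_def]
    split_ifs <;> simp_all [Fin.ext_iff]
  have hget : ∀ i, (u ++ b :: a :: w).get (s i) = (u ++ a :: b :: w).get i := fun i => by
    simp only [get_eq_getElem, hs, Equiv.swap_apply_def, getElem_append, getElem_cons]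
    split_ifs <;> first | omega | simp_all
  refine ⟨⟨s, fun {i j} => ?_⟩, hget⟩
  have hord : ¬ I ((u ++ a :: b :: w).get i) ((u ++ a :: b :: w).get j) →
      (Equiv.swap k (k + 1) i < Equiv.swap k (k + 1) j ↔ i < j) := fun hij =>
    Equiv.swap_add_one_lt_iff
      (fun ⟨hi, hj⟩ => hij (by simpa [k, getElem_append, hi, hj] using hab))
      (fun ⟨hi, hj⟩ => hij (by simpa [k, getElem_append, hi, hj] using hsymm a b hab))
  simp only [depL, hget, Fin.lt_def, hs]
  exact and_congr_left hord

theorem exists_relIso_depL_of_reflTransGen (hsymm : ∀ a b, I a b → I b a) {α β : List A}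
    (h : ReflTransGen (SwapRel I) α β) :
    ∃ e : depL I α ≃r depL I β, ∀ i, β.get (e i) = α.get i := by
  induction h with
  | refl => exact ⟨.refl _, fun _ => rfl⟩
  | tail _ hstep ih =>
    obtain ⟨e₁, he₁⟩ := ih
    obtain ⟨e₂, he₂⟩ := exists_relIso_depL hsymm hstep
    exact ⟨e₁.trans e₂, fun i => (he₂ (e₁ i)).trans (he₁ i)⟩

end SwapRel

theorem stmt14_general {A : Type*} (I : A → A → Prop)
    (hsymm : ∀ a b, I a b → I b a)
    (α : List A) :
    (∀ σ : Fin α.length ≃ Fin α.length,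
      (∀ i j, Relation.TransGen (depL I α) i j → σ.symm i < σ.symm j) →
      Relation.ReflTransGen (SwapRel I) α (List.ofFn fun i => α.get (σ i))) ∧
    (∀ β : List A, Relation.ReflTransGen (SwapRel I) α β →
      ∃ e : Fin α.length ≃ Fin β.length,
        (∀ i, β.get (e i) = α.get i) ∧
        (∀ i j, Relation.TransGen (depL I α) i j ↔
          Relation.TransGen (depL I β) (e i) (e j))) := by
  refine ⟨fun σ hσ => ?_, fun β hβ => ?_⟩
  · have hinv : ∀ i j, i < j → σ.symm j < σ.symm i → I (α.get i) (α.get j) :=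
      fun i j hij hji => by_contra fun hdep => (hσ i j (.single ⟨hij, hdep⟩)).asymm hji
    have h := SwapRel.reflTransGen_ofFn_comp_perm α.get σ hinv
    rwa [ofFn_get] at h
  · obtain ⟨e, he⟩ := SwapRel.exists_relIso_depL_of_reflTransGen hsymm hβ
    exact ⟨e.toEquiv, he, fun i j => e.transGen_apply_iff.symm⟩

/-- Every linearization of the partial order `po_I(α)` (the word read along any
topological ordering of the dependence DAG) belongs to the trace `[α]_I`; and
consequently any two strings related by a sequence of swaps of adjacent independent
letters induce isomorphic labeled partial orders. -/
theorem stmt14 {A : Type*} (I : A → A → Prop)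
    (hsymm : ∀ a b, I a b → I b a) (hirr : ∀ a, ¬ I a a)
    (α : List A) :
    (∀ σ : Fin α.length ≃ Fin α.length,
      (∀ i j, Relation.TransGen (depL I α) i j → σ.symm i < σ.symm j) →
      Relation.ReflTransGen (SwapRel I) α (List.ofFn fun i => α.get (σ i))) ∧
    (∀ β : List A, Relation.ReflTransGen (SwapRel I) α β →
      ∃ e : Fin α.length ≃ Fin β.length,
        (∀ i, β.get (e i) = α.get i) ∧
        (∀ i j, Relation.TransGen (depL I α) i j ↔
          Relation.TransGen (depL I β) (e i) (e j))) :=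
  stmt14_general I hsymm α
end
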